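/- Let p, q be odd integers with 3 ≤ p ≤ q. Then the polynomial g_{p,q}(t) = Ψ_p(t)Ψ_q(t)Φ_6(t^{(p−1)(q−1)/2}) − Ψ_{pq}(t) is divisible by t(1−t)²Ψ_{q−1}(t) in ℚ[t], and the quotient f_{p,q}(t) = g_{p,q}(t)/(t(1−t)²Ψ_{q−1}(t)) is a palindromic polynomial of degree (p−1)q − 3. -/

import Mathlib

/-!
Write `c = (p-1)(q-1)/2`, so that `2c = (p-1)(q-1)` because `p` is odd. Then `Ψ_p Ψ_q Φ_6(t^c)` and
`Ψ_{pq}` are both self-reciprocal of formal degree `pq - 1`, hence so is `g`; with `g(0) = 0` and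
`g'(0) = 1` this gives `deg g = pq - 2`.

Divisibility: `g(1) = pq - pq = 0` and `g'(1) = pq((p-1) + (q-1) + 2c - (pq-1))/2 = 0`, so `(t-1)² ∣ g`;
modulo `Ψ_{q-1}` we have `t^{q-1} = 1`, hence `t^c = 1`, `Ψ_q = 1` and `Ψ_{pq} = Ψ_p`, so `g ≡ 0`.
As `t`, `(t-1)²` and `Ψ_{q-1}` are pairwise coprime, their product divides `g`. The quotient is
palindromic because the divisor `(1-t)²Ψ_{q-1}` is self-reciprocal and `g` is.
-/

open Polynomial

/-- `Ψ_m(t) = 1 + t + ⋯ + t^{m-1} ∈ ℚ[t]`. -/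
noncomputable def PsiQ (m : ℕ) : Polynomial ℚ :=
  ∑ i ∈ Finset.range m, Polynomial.X ^ i

/-- `g_{p,q}(t) = Ψ_p(t)Ψ_q(t)Φ_6(t^{(p-1)(q-1)/2}) - Ψ_{pq}(t) ∈ ℚ[t]`. -/
noncomputable def gPQ (p q : ℕ) : Polynomial ℚ :=
  PsiQ p * PsiQ q *
      (Polynomial.cyclotomic 6 ℚ).comp (Polynomial.X ^ ((p - 1) * (q - 1) / 2)) -
    PsiQ (p * q)

lemma pow_eq_one_of_geom_sum_eq_zero {R : Type*} [CommRing R] {x : R} {n : ℕ}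
    (hx : ∑ i ∈ Finset.range n, x ^ i = 0) : x ^ n = 1 := by
  rw [← sub_eq_zero, ← geom_sum_mul, hx, zero_mul]

lemma geom_sum_range_mul_add_of_geom_sum_eq_zero {R : Type*} [CommRing R] {x : R} {n : ℕ}
    (hx : ∑ i ∈ Finset.range n, x ^ i = 0) (m r : ℕ) :
    ∑ i ∈ Finset.range (n * m + r), x ^ i = ∑ i ∈ Finset.range r, x ^ i := by
  induction m with
  | zero => simp
  | succ m ih =>
    rw [Nat.mul_succ, show n * m + n + r = n + (n * m + r) by ring, Finset.sum_range_add]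
    simp only [pow_add, pow_eq_one_of_geom_sum_eq_zero hx, one_mul, hx, zero_add]
    exact ih

lemma eval_zero_derivative {R : Type*} [Semiring R] (f : R[X]) :
    (derivative f).eval 0 = f.coeff 1 := by
  rw [← coeff_zero_eq_eval_zero, coeff_derivative]
  simp

lemma sq_X_sub_C_dvd_of_isRoot_derivative {R : Type*} [CommRing R] {f : R[X]} {a : R}
    (h : f.IsRoot a) (h' : (derivative f).IsRoot a) : (X - C a) ^ 2 ∣ f := by
  obtain ⟨g, rfl⟩ := dvd_iff_isRoot.2 h
  rw [derivative_mul, derivative_sub, derivative_X, derivative_C, sub_zero, one_mul] at h'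
  have hg : g.IsRoot a := by simpa [IsRoot] using h'
  rw [sq]
  exact mul_dvd_mul_left _ (dvd_iff_isRoot.2 hg)

lemma reflect_eq_self_of_reflect_mul_eq_self {R : Type*} [CommRing R] [IsDomain R] {u v : R[X]}
    {M N : ℕ} (hu0 : u ≠ 0) (huM : u.natDegree ≤ M) (hu : reflect M u = u)
    (hvN : v.natDegree ≤ N) (huv : reflect (M + N) (u * v) = u * v) : reflect N v = v := by
  rw [reflect_mul _ _ huM hvN, hu] at huv
  exact mul_left_cancel₀ hu0 huv

lemma coeff_eq_coeff_sub_of_reflect_X_mul {R : Type*} [Semiring R] {f : R[X]} {N i : ℕ}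
    (h : reflect (N + 2) (X * f) = X * f) (hi : i ≤ N) : f.coeff i = f.coeff (N - i) := by
  have h' := congrArg (coeff · (i + 1)) h
  simp only [coeff_reflect, coeff_X_mul] at h'
  rw [revAt_le (by omega), show N + 2 - (i + 1) = N - i + 1 by omega, coeff_X_mul] at h'
  exact h'.symm

lemma cyclotomic_six_comp_X_pow (R : Type*) [CommRing R] (c : ℕ) :
    (cyclotomic 6 R).comp (X ^ c) = X ^ (2 * c) - X ^ c + 1 := by
  simp [cyclotomic_six, ← pow_mul, mul_comm]

section PsiQ

lemma coeff_PsiQ (m i : ℕ) : (PsiQ m).coeff i = if i < m then 1 else 0 := by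
  simp [PsiQ, coeff_X_pow]

lemma PsiQ_ne_zero {m : ℕ} (hm : 0 < m) : PsiQ m ≠ 0 := fun h => by
  simpa [h, hm] using coeff_PsiQ m 0

lemma natDegree_PsiQ {m : ℕ} (hm : 0 < m) : (PsiQ m).natDegree = m - 1 :=
  natDegree_eq_of_le_of_coeff_ne_zero
    (natDegree_le_iff_coeff_eq_zero.2 fun i hi => by rw [coeff_PsiQ, if_neg (by omega)])
    (by rw [coeff_PsiQ, if_pos (by omega)]; exact one_ne_zero)

lemma reflect_PsiQ (m : ℕ) : reflect (m - 1) (PsiQ m) = PsiQ m := by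
  ext i
  rw [coeff_reflect, coeff_PsiQ, coeff_PsiQ]
  rcases le_or_gt i (m - 1) with hi | hi
  · rw [revAt_le hi]
    congr 1
    exact propext (by omega)
  · rw [revAt_eq_self_of_lt hi]

lemma eval_zero_PsiQ {m : ℕ} (hm : 0 < m) : (PsiQ m).eval 0 = 1 := by
  rw [← coeff_zero_eq_eval_zero, coeff_PsiQ, if_pos hm]

lemma eval_zero_derivative_PsiQ {m : ℕ} (hm : 1 < m) : (derivative (PsiQ m)).eval 0 = 1 := by
  rw [eval_zero_derivative, coeff_PsiQ, if_pos hm]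

lemma eval_one_PsiQ (m : ℕ) : (PsiQ m).eval 1 = m := by
  simp [PsiQ]

lemma eval_one_derivative_PsiQ (m : ℕ) :
    (derivative (PsiQ m)).eval 1 = m * (m - 1) / 2 := by
  induction m with
  | zero => simp [PsiQ]
  | succ m ih =>
    simp only [PsiQ, Finset.sum_range_succ, derivative_add, eval_add] at ih ⊢
    rw [ih]
    simp [derivative_X_pow]
    ring

lemma natDegree_one_sub_X_sq_mul_PsiQ {m : ℕ} (hm : 2 ≤ m) :
    ((1 - X) ^ 2 * PsiQ (m - 1)).natDegree = m := by
  have h1X : ((1 - X) ^ 2 : ℚ[X]).natDegree = 2 := by compute_degree!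
  rw [natDegree_mul (ne_zero_of_natDegree_gt (n := 1) (by omega)) (PsiQ_ne_zero (by omega)), h1X,
    natDegree_PsiQ (by omega)]
  omega

lemma reflect_one_sub_X_sq_mul_PsiQ {m : ℕ} (hm : 2 ≤ m) :
    reflect m ((1 - X) ^ 2 * PsiQ (m - 1)) = (1 - X) ^ 2 * PsiQ (m - 1) := by
  have h1 : (1 - X : ℚ[X]).natDegree ≤ 1 := by compute_degree!
  have hsq : reflect 2 ((1 - X) ^ 2 : ℚ[X]) = (1 - X) ^ 2 := by
    rw [sq, show (2 : ℕ) = 1 + 1 from rfl, reflect_mul _ _ h1 h1, reflect_sub, reflect_one,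
      reflect_one_X]
    ring
  obtain ⟨k, rfl⟩ := Nat.exists_eq_add_of_le hm
  have hΨ : reflect k (PsiQ (k + 1)) = PsiQ (k + 1) := reflect_PsiQ (k + 1)
  have hdeg : (PsiQ (k + 1)).natDegree ≤ k := (natDegree_PsiQ k.succ_pos).le
  rw [show 2 + k - 1 = k + 1 by omega, reflect_mul _ _ (by compute_degree!) hdeg, hsq, hΨ]

end PsiQ

lemma gPQ_eq (p q : ℕ) :
    gPQ p q = PsiQ p * PsiQ q *
      (X ^ (2 * ((p - 1) * (q - 1) / 2)) - X ^ ((p - 1) * (q - 1) / 2) + 1) - PsiQ (p * q) := by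
  rw [gPQ, cyclotomic_six_comp_X_pow]

section gPQ

variable {p q : ℕ}

lemma two_mul_half_mul_sub_one (hp : Odd p) :
    2 * ((p - 1) * (q - 1) / 2) = (p - 1) * (q - 1) :=
  Nat.two_mul_div_two_of_even ((Nat.Odd.sub_odd hp odd_one).mul_right _)

lemma mul_sub_one_eq_of_odd (hp : Odd p) (hq : 0 < q) :
    p * q - 1 = (p - 1) + (q - 1) + 2 * ((p - 1) * (q - 1) / 2) := by
  rw [two_mul_half_mul_sub_one hp]
  obtain ⟨p, rfl⟩ := Nat.exists_eq_add_of_lt hp.pos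
  obtain ⟨q, rfl⟩ := Nat.exists_eq_add_of_lt hq
  simp only [zero_add, Nat.add_sub_cancel]
  ring_nf
  omega

lemma natDegree_gPQ_le (hp : Odd p) (hq : 0 < q) : (gPQ p q).natDegree ≤ p * q - 1 := by
  rw [gPQ_eq, mul_sub_one_eq_of_odd hp hq]
  refine (natDegree_sub_le _ _).trans (max_le ?_ ?_)
  · refine natDegree_mul_le.trans (add_le_add (natDegree_mul_le.trans
      (add_le_add (natDegree_PsiQ hp.pos).le (natDegree_PsiQ hq).le)) ?_)
    compute_degree
    omega
  · rw [natDegree_PsiQ (Nat.mul_pos hp.pos hq), mul_sub_one_eq_of_odd hp hq]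

lemma reflect_gPQ (hp : Odd p) (hq : 0 < q) : reflect (p * q - 1) (gPQ p q) = gPQ p q := by
  rw [gPQ_eq]
  set c := (p - 1) * (q - 1) / 2
  have hN : p * q - 1 = (p - 1) + (q - 1) + 2 * c := mul_sub_one_eq_of_odd hp hq
  have hΦ : reflect (2 * c) (X ^ (2 * c) - X ^ c + 1 : ℚ[X]) = X ^ (2 * c) - X ^ c + 1 := by
    rw [reflect_add, reflect_sub, reflect_monomial, reflect_monomial, reflect_one,
      revAt_le le_rfl, revAt_le (by omega), Nat.sub_self, two_mul, Nat.add_sub_cancel]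
    ring
  have hdeg : (X ^ (2 * c) - X ^ c + 1 : ℚ[X]).natDegree ≤ 2 * c := by
    compute_degree
    omega
  rw [reflect_sub, reflect_PsiQ (p * q), hN, reflect_mul _ _
    (natDegree_mul_le.trans (add_le_add (natDegree_PsiQ hp.pos).le (natDegree_PsiQ hq).le)) hdeg,
    reflect_mul _ _ (natDegree_PsiQ hp.pos).le (natDegree_PsiQ hq).le, reflect_PsiQ, reflect_PsiQ,
    hΦ]

lemma coeff_zero_gPQ (hp : 0 < p) (hq : 0 < q) : (gPQ p q).coeff 0 = 0 := by
  rw [coeff_zero_eq_eval_zero, gPQ_eq]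
  set c := (p - 1) * (q - 1) / 2
  rcases eq_or_ne c 0 with hc | hc <;>
    simp [eval_zero_PsiQ hp, eval_zero_PsiQ hq, eval_zero_PsiQ (Nat.mul_pos hp hq), hc]

lemma coeff_one_gPQ (hp : 3 ≤ p) (hq : 3 ≤ q) : (gPQ p q).coeff 1 = 1 := by
  have hc : 2 ≤ (p - 1) * (q - 1) / 2 := by
    have : 2 * 2 ≤ (p - 1) * (q - 1) := Nat.mul_le_mul (by omega) (by omega)
    omega
  rw [← eval_zero_derivative, gPQ_eq]
  set c := (p - 1) * (q - 1) / 2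
  simp [derivative_mul, derivative_X_pow, eval_zero_PsiQ (show 0 < p by omega),
    eval_zero_PsiQ (show 0 < q by omega), eval_zero_derivative_PsiQ (show 1 < p by omega),
    eval_zero_derivative_PsiQ (show 1 < q by omega),
    eval_zero_derivative_PsiQ (show 1 < p * q by nlinarith), zero_pow (show c ≠ 0 by omega),
    zero_pow (show c - 1 ≠ 0 by omega), zero_pow (show 2 * c - 1 ≠ 0 by omega),
    zero_pow (show 2 * c ≠ 0 by omega)]

lemma natDegree_gPQ (hp : Odd p) (hp3 : 3 ≤ p) (hq : 3 ≤ q) :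
    (gPQ p q).natDegree = p * q - 2 := by
  have hpq : 9 ≤ p * q := Nat.mul_le_mul hp3 hq
  have hrefl := reflect_gPQ hp (show 0 < q by omega)
  refine natDegree_eq_of_le_of_coeff_ne_zero (natDegree_le_iff_coeff_eq_zero.2 fun i hi => ?_) ?_
  · rcases (show i = p * q - 1 ∨ p * q - 1 < i by omega) with rfl | hi
    · rw [← hrefl, coeff_reflect, revAt_le le_rfl, Nat.sub_self, coeff_zero_gPQ hp.pos (by omega)]
    · exact coeff_eq_zero_of_natDegree_lt ((natDegree_gPQ_le hp (by omega)).trans_lt hi)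
  · rw [← hrefl, coeff_reflect, revAt_le (show p * q - 2 ≤ p * q - 1 by omega),
      show p * q - 1 - (p * q - 2) = 1 by omega, coeff_one_gPQ hp3 hq]
    exact one_ne_zero

lemma eval_one_gPQ : (gPQ p q).eval 1 = 0 := by
  simp [gPQ_eq, eval_one_PsiQ]

lemma eval_one_derivative_gPQ (hp : Odd p) (hq : 0 < q) : (derivative (gPQ p q)).eval 1 = 0 := by
  rw [gPQ_eq]
  have h2c := two_mul_half_mul_sub_one (q := q) hp
  set c := (p - 1) * (q - 1) / 2
  have h2c' : 2 * (c : ℚ) = (p - 1) * (q - 1) := by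
    rw [← Nat.cast_pred hp.pos, ← Nat.cast_pred hq]
    exact_mod_cast h2c
  simp [derivative_mul, derivative_X_pow, eval_one_PsiQ, eval_one_derivative_PsiQ]
  linear_combination (p * q / 2 : ℚ) * h2c'

lemma PsiQ_dvd_gPQ (hp : Odd p) (n : ℕ) : PsiQ n ∣ gPQ p (n + 1) := by
  obtain ⟨a, rfl⟩ := hp
  set x := AdjoinRoot.root (PsiQ n)
  have hX : AdjoinRoot.mk (PsiQ n) X = x := AdjoinRoot.mk_X
  have hmk : ∀ m, AdjoinRoot.mk (PsiQ n) (PsiQ m) = ∑ i ∈ Finset.range m, x ^ i := by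
    intro m
    rw [show PsiQ m = ∑ i ∈ Finset.range m, X ^ i from rfl, map_sum]
    simp only [map_pow, hX]
  have hx : ∑ i ∈ Finset.range n, x ^ i = 0 := by rw [← hmk, AdjoinRoot.mk_self]
  have hq : ∑ i ∈ Finset.range (n + 1), x ^ i = 1 := by
    simpa using geom_sum_range_mul_add_of_geom_sum_eq_zero hx 1 1
  have hpq : ∑ i ∈ Finset.range ((2 * a + 1) * (n + 1)), x ^ i =
      ∑ i ∈ Finset.range (2 * a + 1), x ^ i := by
    rw [show (2 * a + 1) * (n + 1) = n * (2 * a + 1) + (2 * a + 1) by ring]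
    exact geom_sum_range_mul_add_of_geom_sum_eq_zero hx _ _
  have hc : (2 * a + 1 - 1) * (n + 1 - 1) / 2 = n * a := by
    simp only [Nat.add_sub_cancel]
    rw [show 2 * a * n = 2 * (n * a) by ring, Nat.mul_div_cancel_left _ two_pos]
  rw [← AdjoinRoot.mk_eq_zero, gPQ_eq, hc]
  simp only [map_sub, map_add, map_mul, map_pow, map_one, hX, hmk]
  rw [hq, hpq, show 2 * (n * a) = n * (2 * a) by ring, pow_mul x n (2 * a), pow_mul x n a,
    pow_eq_one_of_geom_sum_eq_zero hx]
  ring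

lemma X_mul_X_sub_one_sq_mul_PsiQ_dvd_gPQ (hp : Odd p) (hq : 2 ≤ q) :
    X * (X - 1) ^ 2 * PsiQ (q - 1) ∣ gPQ p q := by
  have hX : X ∣ gPQ p q := X_dvd_iff.2 (coeff_zero_gPQ hp.pos (by omega))
  have hX1 : (X - 1) ^ 2 ∣ gPQ p q := by
    simpa using sq_X_sub_C_dvd_of_isRoot_derivative (a := (1 : ℚ)) eval_one_gPQ
      (eval_one_derivative_gPQ hp (by omega))
  have hΨ : PsiQ (q - 1) ∣ gPQ p q := by
    obtain ⟨n, rfl⟩ := Nat.exists_eq_add_of_lt (show 0 < q by omega)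
    simpa using PsiQ_dvd_gPQ hp n
  have hXΨ : IsCoprime X (PsiQ (q - 1)) := by
    refine prime_X.coprime_iff_not_dvd.2 fun h => ?_
    rw [X_dvd_iff, coeff_PsiQ, if_pos (by omega)] at h
    exact one_ne_zero h
  have hX1Ψ : IsCoprime (X - 1) (PsiQ (q - 1)) := by
    have hirr : Irreducible (X - 1 : ℚ[X]) := by simpa using irreducible_X_sub_C (1 : ℚ)
    refine hirr.coprime_iff_not_dvd.2 fun h => ?_
    have h1 := (dvd_iff_isRoot (a := (1 : ℚ))).1 (by simpa using h)
    rw [IsRoot, eval_one_PsiQ, Nat.cast_eq_zero] at h1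
    omega
  have hXX1 : IsCoprime X (X - 1 : ℚ[X]) := ⟨1, -1, by ring⟩
  exact (hXΨ.mul_left hX1Ψ.pow_left).mul_dvd (hXX1.pow_right.mul_dvd hX hX1) hΨ

end gPQ

theorem fpq_palindromic_general (p q : ℕ) (hp : Odd p) (h3 : 3 ≤ p) (hpq : p ≤ q) :
    ∃ f : Polynomial ℚ,
      gPQ p q = Polynomial.X * (1 - Polynomial.X) ^ 2 * PsiQ (q - 1) * f ∧
      f ≠ 0 ∧ f.natDegree = (p - 1) * q - 3 ∧
      ∀ i ≤ f.natDegree, f.coeff i = f.coeff (f.natDegree - i) := by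
  have hq : 3 ≤ q := h3.trans hpq
  have hpq9 : 9 ≤ p * q := Nat.mul_le_mul h3 hq
  obtain ⟨f, hf⟩ := X_mul_X_sub_one_sq_mul_PsiQ_dvd_gPQ hp (by omega : 2 ≤ q)
  have hg : gPQ p q = ((1 - X) ^ 2 * PsiQ (q - 1)) * (X * f) := by rw [hf]; ring
  have hKdeg := natDegree_one_sub_X_sq_mul_PsiQ (show 2 ≤ q by omega)
  have hK0 : (1 - X) ^ 2 * PsiQ (q - 1) ≠ 0 := ne_zero_of_natDegree_gt (n := 0) (by omega)
  have hgdeg := natDegree_gPQ hp h3 hq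
  have hf0 : f ≠ 0 := by
    rintro rfl
    rw [hg, mul_zero, mul_zero, natDegree_zero] at hgdeg
    omega
  rw [hg, natDegree_mul hK0 (mul_ne_zero X_ne_zero hf0), natDegree_X_mul hf0, hKdeg] at hgdeg
  refine ⟨f, by rw [hf]; ring, hf0, by rw [Nat.sub_one_mul]; omega,
    fun i hi => coeff_eq_coeff_sub_of_reflect_X_mul ?_ hi⟩
  refine reflect_eq_self_of_reflect_mul_eq_self hK0 hKdeg.le
    (reflect_one_sub_X_sq_mul_PsiQ (by omega)) (by rw [natDegree_X_mul hf0]; omega) ?_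
  rw [← hg, show q + (f.natDegree + 2) = p * q - 1 by omega, reflect_gPQ hp (by omega)]

/-- For odd `3 ≤ p ≤ q`, `g_{p,q}` is divisible by `t(1-t)²Ψ_{q-1}` in `ℚ[t]` and
the quotient `f_{p,q}` is a palindromic polynomial of degree `(p-1)q - 3`. -/
theorem fpq_palindromic (p q : ℕ) (hp : Odd p) (hq : Odd q) (h3 : 3 ≤ p) (hpq : p ≤ q) :
    ∃ f : Polynomial ℚ,
      gPQ p q = Polynomial.X * (1 - Polynomial.X) ^ 2 * PsiQ (q - 1) * f ∧
      f ≠ 0 ∧ f.natDegree = (p - 1) * q - 3 ∧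
      ∀ i ≤ f.natDegree, f.coeff i = f.coeff (f.natDegree - i) :=
  fpq_palindromic_general p q hp h3 hpq
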